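/- arXiv:2101.04388 — 2 statements merged into one kernel-verified Lean document; each statement's English description precedes it below -/
import Mathlib

section
/- Let M, K, N be positive integers with K ≤ M·N, and let μ, μ̂ : Fin M → ℕ → ℝ. For k : Fin M → ℕ define the system reward V(k) = ∑_{m} k(m)·μ(m, k(m)) and the estimated system reward V̂(k) = ∑_{m} k(m)·μ̂(m, k(m)), and let S = { k : Fin M → ℕ : ∑_m k(m) = K } be the set of feasible configurations. Suppose J₁ is the maximum of V over S, J₂ is a real number with J₂ < J₁ such that every k ∈ S with V(k) ≠ J₁ satisfies V(k) ≤ J₂, and set Δ = (J₁ − J₂)/(2·M·N). If |μ̂(m, n) − μ(m, n)| < Δ for every m ∈ Fin M and every natural number n ≤ K, then every k̂ ∈ S that maximizes V̂ over S satisfies V(k̂) = J₁. -/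
/-!
On a feasible configuration `k` the estimated and true system rewards differ by at most
`∑ m, k m * |μ̂ m (k m) - μ m (k m)| < K Δ ≤ M N Δ = (J₁ - J₂) / 2`. So an optimal configuration
has estimated reward above `(J₁ + J₂) / 2`, while a suboptimal one, whose true reward is at
most `J₂`, has estimated reward below it; hence a maximizer of the estimates is optimal.
-/

open Finset

section SystemReward

variable {ι : Type*} [Fintype ι]

def systemReward (μ : ι → ℕ → ℝ) (k : ι → ℕ) : ℝ :=
  ∑ i, (k i : ℝ) * μ i (k i)

theorem abs_systemReward_sub_le (μ μ' : ι → ℕ → ℝ) (k : ι → ℕ) :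
    |systemReward μ' k - systemReward μ k| ≤ ∑ i, (k i : ℝ) * |μ' i (k i) - μ i (k i)| :=
  calc |systemReward μ' k - systemReward μ k|
      = |∑ i, (k i : ℝ) * (μ' i (k i) - μ i (k i))| := by
        simp only [systemReward, mul_sub, sum_sub_distrib]
    _ ≤ ∑ i, |(k i : ℝ) * (μ' i (k i) - μ i (k i))| := abs_sum_le_sum_abs _ _
    _ = ∑ i, (k i : ℝ) * |μ' i (k i) - μ i (k i)| := by
        simp only [abs_mul, Nat.abs_cast]

theorem abs_systemReward_sub_lt {μ μ' : ι → ℕ → ℝ} {k : ι → ℕ} {δ : ℝ}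
    (hk : 0 < ∑ i, k i) (hμ : ∀ i, ∀ n ≤ ∑ i, k i, |μ' i n - μ i n| < δ) :
    |systemReward μ' k - systemReward μ k| < (∑ i, k i : ℕ) * δ := by
  have hle (i : ι) : k i ≤ ∑ i, k i := single_le_sum (fun j _ ↦ Nat.zero_le (k j)) (mem_univ i)
  obtain ⟨i₀, -, hi₀⟩ := exists_ne_zero_of_sum_ne_zero hk.ne'
  have hsum : ∑ i, (k i : ℝ) * |μ' i (k i) - μ i (k i)| < ∑ i, (k i : ℝ) * δ := by
    refine sum_lt_sum (fun i _ ↦ ?_) ⟨i₀, mem_univ i₀, ?_⟩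
    · exact mul_le_mul_of_nonneg_left (hμ i (k i) (hle i)).le (Nat.cast_nonneg _)
    · exact mul_lt_mul_of_pos_left (hμ i₀ (k i₀) (hle i₀)) (by positivity)
  calc |systemReward μ' k - systemReward μ k|
      ≤ ∑ i, (k i : ℝ) * |μ' i (k i) - μ i (k i)| := abs_systemReward_sub_le μ μ' k
    _ < ∑ i, (k i : ℝ) * δ := hsum
    _ = (∑ i, k i : ℕ) * δ := by rw [← sum_mul, Nat.cast_sum]

end SystemReward

theorem eq_of_le_of_abs_sub_lt_half_gap {α : Type*} {S : Set α} {f g : α → ℝ} {J₁ J₂ : ℝ}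
    (hfg : ∀ x ∈ S, |g x - f x| < (J₁ - J₂) / 2) (hgap : ∀ x ∈ S, f x ≠ J₁ → f x ≤ J₂)
    {y : α} (hy : y ∈ S) (hfy : f y = J₁) {x : α} (hx : x ∈ S) (hmax : g y ≤ g x) :
    f x = J₁ := by
  by_contra hne
  have hfx := hgap x hx hne
  have hx' := (abs_lt.mp (hfg x hx)).2
  have hy' := (abs_lt.mp (hfg y hy)).1
  linarith

theorem natCast_mul_div_le_half {K M N : ℕ} {d : ℝ} (hK : 0 < K) (hKMN : K ≤ M * N)
    (hd : 0 ≤ d) : (K : ℝ) * (d / (2 * M * N)) ≤ d / 2 := by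
  have hMN : 0 < M * N := hK.trans_le hKMN
  have hM : (M : ℝ) ≠ 0 := by exact_mod_cast (Nat.pos_of_mul_pos_right hMN).ne'
  have hN : (N : ℝ) ≠ 0 := by exact_mod_cast (Nat.pos_of_mul_pos_left hMN).ne'
  calc (K : ℝ) * (d / (2 * M * N)) ≤ (M * N : ℝ) * (d / (2 * M * N)) := by
        gcongr
        exact_mod_cast hKMN
    _ = d / 2 := by field_simp

theorem optimal_config_from_estimates_general
    (M K N : ℕ) (hK : 0 < K) (hKMN : K ≤ M * N)
    (μ μhat : Fin M → ℕ → ℝ) (J₁ J₂ : ℝ)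
    (hJ₁_mem : ∃ k : Fin M → ℕ, (∑ m, k m = K) ∧
      (∑ m, (k m : ℝ) * μ m (k m)) = J₁)
    (hJ₂_lt : J₂ < J₁)
    (hJ₂ : ∀ k : Fin M → ℕ, (∑ m, k m = K) →
      (∑ m, (k m : ℝ) * μ m (k m)) ≠ J₁ →
      (∑ m, (k m : ℝ) * μ m (k m)) ≤ J₂)
    (hest : ∀ m : Fin M, ∀ n : ℕ, n ≤ K →
      |μhat m n - μ m n| < (J₁ - J₂) / (2 * M * N))
    (khat : Fin M → ℕ) (hkhat : ∑ m, khat m = K)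
    (hkhat_max : ∀ k : Fin M → ℕ, (∑ m, k m = K) →
      (∑ m, (k m : ℝ) * μhat m (k m)) ≤ ∑ m, (khat m : ℝ) * μhat m (khat m)) :
    (∑ m, (khat m : ℝ) * μ m (khat m)) = J₁ := by
  have hclose : ∀ k ∈ {k : Fin M → ℕ | ∑ m, k m = K},
      |systemReward μhat k - systemReward μ k| < (J₁ - J₂) / 2 := by
    intro k (hk : ∑ m, k m = K)
    subst hk
    exact (abs_systemReward_sub_lt hK hest).trans_le
      (natCast_mul_div_le_half hK hKMN (sub_nonneg.mpr hJ₂_lt.le))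
  obtain ⟨kstar, hkstar, hkstar_opt⟩ := hJ₁_mem
  exact eq_of_le_of_abs_sub_lt_half_gap hclose hJ₂ hkstar hkstar_opt hkhat
    (hkhat_max kstar hkstar)

/-- Correctness of the allocation phase: if every estimate `μ̂(m,n)` is within
`Δ = (J₁ - J₂)/(2MN)` of the true mean `μ(m,n)`, then any feasible configuration
maximizing the estimated system reward achieves the optimal true system reward `J₁`. -/
theorem optimal_config_from_estimates
    (M K N : ℕ) (hM : 0 < M) (hK : 0 < K) (hN : 0 < N) (hKMN : K ≤ M * N)
    (μ μhat : Fin M → ℕ → ℝ) (J₁ J₂ : ℝ)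
    (hJ₁_ub : ∀ k : Fin M → ℕ, (∑ m, k m = K) →
      (∑ m, (k m : ℝ) * μ m (k m)) ≤ J₁)
    (hJ₁_mem : ∃ k : Fin M → ℕ, (∑ m, k m = K) ∧
      (∑ m, (k m : ℝ) * μ m (k m)) = J₁)
    (hJ₂_lt : J₂ < J₁)
    (hJ₂ : ∀ k : Fin M → ℕ, (∑ m, k m = K) →
      (∑ m, (k m : ℝ) * μ m (k m)) ≠ J₁ →
      (∑ m, (k m : ℝ) * μ m (k m)) ≤ J₂)
    (hest : ∀ m : Fin M, ∀ n : ℕ, n ≤ K →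
      |μhat m n - μ m n| < (J₁ - J₂) / (2 * M * N))
    (khat : Fin M → ℕ) (hkhat : ∑ m, khat m = K)
    (hkhat_max : ∀ k : Fin M → ℕ, (∑ m, k m = K) →
      (∑ m, (k m : ℝ) * μhat m (k m)) ≤ ∑ m, (khat m : ℝ) * μhat m (khat m)) :
    (∑ m, (khat m : ℝ) * μ m (khat m)) = J₁ :=
  optimal_config_from_estimates_general M K N hK hKMN μ μhat J₁ J₂ hJ₁_mem hJ₂_lt hJ₂ hest khat
    hkhat hkhat_max
end

section
/- Let τ ≥ 1 and Δ > 0 be real numbers, r ≥ 1 a natural number, and T a real number with (r : ℝ) ≤ √(2T) and 2T ≥ 1. Then ∑_{ℓ=1}^{r} ( log(ℓ·τ)/(2Δ²) + 1/(e − 2) ) ≤ √(2T)·( log τ/(2Δ²) + 1.4 ) + (√(2T) + 1)·log(2T)/(4Δ²), where log is the natural logarithm and e is Euler's number. -/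
open Finset

namespace Real

theorem one_div_exp_one_sub_two_le : 1 / (exp 1 - 2) ≤ 1.4 := by
  have he : 2.7182818283 < exp 1 := exp_one_gt_d9
  rw [div_le_iff₀ (by linarith)]
  linarith

theorem log_le_half_log_of_le_sqrt {x y : ℝ} (hx : 0 < x) (h : x ≤ √y) :
    log x ≤ log y / 2 := by
  have hy : 0 ≤ y := sqrt_pos.mp (hx.trans_le h) |>.le
  calc log x ≤ log √y := log_le_log hx h
    _ = log y / 2 := log_sqrt hy

end Real

open Real

theorem superepoch_regret_le (τ Δ T ℓ : ℝ) (hτ : τ ≠ 0) (hℓ : 1 ≤ ℓ) (hℓT : ℓ ≤ √(2 * T)) :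
    log (ℓ * τ) / (2 * Δ ^ 2) + 1 / (exp 1 - 2)
      ≤ (log τ / (2 * Δ ^ 2) + 1.4) + log (2 * T) / (4 * Δ ^ 2) := by
  have hlogℓ : log ℓ / (2 * Δ ^ 2) ≤ log (2 * T) / (4 * Δ ^ 2) := by
    calc log ℓ / (2 * Δ ^ 2) ≤ log (2 * T) / 2 / (2 * Δ ^ 2) := by
          gcongr
          exact log_le_half_log_of_le_sqrt (by linarith) hℓT
      _ = log (2 * T) / (4 * Δ ^ 2) := by ring
  rw [log_mul (by positivity) hτ, add_div]
  linarith [one_div_exp_one_sub_two_le]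

theorem superepoch_regret_chain_general (τ Δ : ℝ) (hτ : 1 ≤ τ)
    (r : ℕ) (T : ℝ)
    (h1 : (r : ℝ) ≤ Real.sqrt (2 * T)) (h2 : 1 ≤ 2 * T) :
    ∑ ℓ ∈ Finset.Icc 1 r,
        (Real.log ((ℓ : ℝ) * τ) / (2 * Δ ^ 2) + 1 / (Real.exp 1 - 2))
      ≤ Real.sqrt (2 * T) * (Real.log τ / (2 * Δ ^ 2) + 1.4)
        + (Real.sqrt (2 * T) + 1) * Real.log (2 * T) / (4 * Δ ^ 2) := by
  set C := log τ / (2 * Δ ^ 2) + 1.4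
  set L := log (2 * T) / (4 * Δ ^ 2)
  have hC : 0 ≤ C := by have := log_nonneg hτ; positivity
  have hL : 0 ≤ L := by have := log_nonneg h2; positivity
  have hterm : ∀ ℓ ∈ Icc 1 r, log ((ℓ : ℝ) * τ) / (2 * Δ ^ 2) + 1 / (exp 1 - 2) ≤ C + L := by
    intro ℓ hℓ
    obtain ⟨hℓ1, hℓr⟩ := mem_Icc.mp hℓ
    exact superepoch_regret_le τ Δ T ℓ (by positivity) (by exact_mod_cast hℓ1)
      (le_trans (by exact_mod_cast hℓr) h1)
  calc ∑ ℓ ∈ Icc 1 r, (log ((ℓ : ℝ) * τ) / (2 * Δ ^ 2) + 1 / (exp 1 - 2))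
      ≤ r * (C + L) := by
        simpa only [Nat.card_Icc, add_tsub_cancel_right, nsmul_eq_mul]
          using sum_le_card_nsmul (Icc 1 r) _ (C + L) hterm
    _ ≤ √(2 * T) * (C + L) := by gcongr
    _ ≤ √(2 * T) * C + (√(2 * T) + 1) * L := by nlinarith
    _ = _ := by rw [mul_div_assoc]

/-- Main chain of inequalities in the proof of Theorem 2: bounding the regret summed over
the `r ≤ √(2T)` complete super-epochs with no user change, with `C = log τ/(2Δ²) + 1.4`. -/
theorem superepoch_regret_chain (τ Δ : ℝ) (hτ : 1 ≤ τ) (hΔ : 0 < Δ)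
    (r : ℕ) (hr : 1 ≤ r) (T : ℝ)
    (h1 : (r : ℝ) ≤ Real.sqrt (2 * T)) (h2 : 1 ≤ 2 * T) :
    ∑ ℓ ∈ Finset.Icc 1 r,
        (Real.log ((ℓ : ℝ) * τ) / (2 * Δ ^ 2) + 1 / (Real.exp 1 - 2))
      ≤ Real.sqrt (2 * T) * (Real.log τ / (2 * Δ ^ 2) + 1.4)
        + (Real.sqrt (2 * T) + 1) * Real.log (2 * T) / (4 * Δ ^ 2) :=
  superepoch_regret_chain_general τ Δ hτ r T h1 h2
end
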